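/- arXiv:2603.09323 — 11 statements merged into one kernel-verified Lean document; each statement's English description precedes it below -/
import Mathlib

section
/- For every real number b, every ψ ∈ (0,1), and every z > 0, the equation b·x^ψ + x = z has exactly one solution x in [0,∞) (with the convention 0^ψ = 0); moreover this solution is strictly positive. -/
open Real

/-- Positivity of any nonnegative solution. -/
lemma stmt0_pos (b ψ z : ℝ) (hψ0 : 0 < ψ) (hz : 0 < z) :
    ∀ x : ℝ, 0 ≤ x → b * x ^ ψ + x = z → 0 < x := by
  intro x hx hxz
  rcases hx.lt_or_eq with h | h
  · exact h
  · exfalso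
    rw [← h, Real.zero_rpow hψ0.ne'] at hxz
    simp at hxz
    linarith

/-- Uniqueness: no two solutions `0 < x < y`. -/
lemma stmt0_uniq (b ψ z : ℝ) (hψ0 : 0 < ψ) (hψ1 : ψ < 1) (hz : 0 < z)
    {x y : ℝ} (hx : 0 < x) (hxy : x < y)
    (hxz : b * x ^ ψ + x = z) (hyz : b * y ^ ψ + y = z) : False := by
  have hy : 0 < y := hx.trans hxy
  have hxp : (0:ℝ) < x ^ ψ := Real.rpow_pos_of_pos hx ψ
  have hyp : (0:ℝ) < y ^ ψ := Real.rpow_pos_of_pos hy ψ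
  have hlt : x ^ ψ < y ^ ψ := Real.rpow_lt_rpow hx.le hxy hψ0
  -- b must be negative
  have hb : b < 0 := by nlinarith
  set c : ℝ := -b with hc
  have hc0 : 0 < c := by simp [hc]; linarith
  have key : y - x = c * (y ^ ψ - x ^ ψ) := by simp [hc]; linarith
  -- from x - c x^ψ = z > 0 : c x^ψ < x
  have hcx : c * x ^ ψ < x := by simp [hc] at hxz ⊢; nlinarith
  -- Bernoulli : (y/x)^ψ ≤ 1 + ψ (y/x - 1)
  have hs : (-1:ℝ) ≤ y / x - 1 := by
    have : 0 < y / x := div_pos hy hx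
    linarith
  have hbern := rpow_one_add_le_one_add_mul_self hs hψ0.le hψ1.le
  rw [add_sub_cancel] at hbern
  -- (y/x)^ψ = y^ψ / x^ψ
  have hdiv : (y / x) ^ ψ = y ^ ψ / x ^ ψ := Real.div_rpow hy.le hx.le ψ
  rw [hdiv] at hbern
  -- so y^ψ - x^ψ ≤ ψ * (y - x) * x^ψ / x
  have h1 : y ^ ψ - x ^ ψ ≤ ψ * (y - x) * (x ^ ψ / x) := by
    have := (div_le_iff₀ hxp).mp hbern
    have hx' : y / x - 1 = (y - x) / x := by field_simp
    rw [hx'] at this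
    calc y ^ ψ - x ^ ψ ≤ (1 + ψ * ((y - x) / x)) * x ^ ψ - x ^ ψ := by linarith
      _ = ψ * (y - x) * (x ^ ψ / x) := by ring
  -- combine
  have hyx : 0 < y - x := by linarith
  have h2 : y - x ≤ c * ψ * (y - x) * (x ^ ψ / x) := by
    calc y - x = c * (y ^ ψ - x ^ ψ) := key
      _ ≤ c * (ψ * (y - x) * (x ^ ψ / x)) := mul_le_mul_of_nonneg_left h1 hc0.le
      _ = c * ψ * (y - x) * (x ^ ψ / x) := by ring
  have h3 : c * (x ^ ψ / x) < 1 := by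
    rw [mul_div_assoc'] at *
    exact (div_lt_one hx).mpr hcx
  have h4 : c * ψ * (y - x) * (x ^ ψ / x) < y - x := by
    have hxd : 0 < x ^ ψ / x := div_pos hxp hx
    calc c * ψ * (y - x) * (x ^ ψ / x) < c * 1 * (y - x) * (x ^ ψ / x) := by
          apply mul_lt_mul_of_pos_right _ hxd
          apply mul_lt_mul_of_pos_right _ hyx
          exact mul_lt_mul_of_pos_left hψ1 hc0
      _ = (c * (x ^ ψ / x)) * (y - x) := by ring
      _ < 1 * (y - x) := mul_lt_mul_of_pos_right h3 hyx
      _ = y - x := one_mul _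
  linarith

/-- For every real `b`, every `ψ ∈ (0,1)`, and every `z > 0`, the equation
`b * x ^ ψ + x = z` has exactly one solution `x ∈ [0,∞)` (with `0 ^ ψ = 0`),
and this solution is strictly positive. -/
theorem stmt_0 (b ψ z : ℝ) (hψ0 : 0 < ψ) (hψ1 : ψ < 1) (hz : 0 < z) :
    (∃! x : ℝ, 0 ≤ x ∧ b * x ^ ψ + x = z) ∧
      ∀ x : ℝ, 0 ≤ x → b * x ^ ψ + x = z → 0 < x := by
  have hpos := stmt0_pos b ψ z hψ0 hz
  refine ⟨?_, hpos⟩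
  -- continuity
  have hcont : Continuous fun x : ℝ => b * x ^ ψ + x := by
    apply Continuous.add _ continuous_id
    apply Continuous.mul continuous_const
    rw [continuous_iff_continuousAt]
    intro x
    exact Real.continuousAt_rpow_const x ψ (Or.inr hψ0.le)
  -- choose M with f M ≥ z
  set M : ℝ := max 1 (max (2 * z) ((2 * |b|) ^ (1 / (1 - ψ)))) with hM
  have hM1 : (1:ℝ) ≤ M := le_max_left _ _
  have hM0 : (0:ℝ) ≤ M := by linarith
  have hMz : 2 * z ≤ M := le_trans (le_max_left _ _) (le_max_right _ _)
  have hMb : (2 * |b|) ^ (1 / (1 - ψ)) ≤ M := le_trans (le_max_right _ _) (le_max_right _ _)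
  have h1ψ : 0 < 1 - ψ := by linarith
  have hpow : 2 * |b| ≤ M ^ (1 - ψ) := by
    have h0 : (0:ℝ) ≤ 2 * |b| := by positivity
    calc 2 * |b| = ((2 * |b|) ^ (1 / (1 - ψ))) ^ (1 - ψ) := by
          rw [← Real.rpow_mul h0, one_div, inv_mul_cancel₀ h1ψ.ne', Real.rpow_one]
      _ ≤ M ^ (1 - ψ) := Real.rpow_le_rpow (Real.rpow_nonneg h0 _) hMb h1ψ.le
  have hMψ : |b| * M ^ ψ ≤ M / 2 := by
    have hMpos : 0 < M := by linarith
    have hMψ0 : (0:ℝ) < M ^ ψ := Real.rpow_pos_of_pos hMpos ψ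
    have : M ^ (1 - ψ) * M ^ ψ = M := by
      rw [← Real.rpow_add hMpos]; simp
    nlinarith
  have hfM : z ≤ b * M ^ ψ + M := by
    have hMψ0 : (0:ℝ) ≤ M ^ ψ := Real.rpow_nonneg hM0 ψ
    have : -(|b| * M ^ ψ) ≤ b * M ^ ψ := by
      have := neg_abs_le b
      nlinarith
    linarith
  have hf0 : b * (0:ℝ) ^ ψ + 0 = 0 := by
    rw [Real.zero_rpow hψ0.ne']; ring
  -- IVT
  have hiv := intermediate_value_Icc hM0 (hcont.continuousOn (s := Set.Icc 0 M))
  have hzmem : z ∈ Set.Icc (b * (0:ℝ) ^ ψ + 0) (b * M ^ ψ + M) := by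
    rw [hf0]; exact ⟨hz.le, hfM⟩
  obtain ⟨x, hxmem, hxz⟩ := hiv hzmem
  refine ⟨x, ⟨hxmem.1, hxz⟩, ?_⟩
  rintro y ⟨hy0, hyz⟩
  by_contra hne
  have hxpos := hpos x hxmem.1 hxz
  have hypos := hpos y hy0 hyz
  rcases lt_or_gt_of_ne hne with h | h
  · exact stmt0_uniq b ψ z hψ0 hψ1 hz hypos h hyz hxz
  · exact stmt0_uniq b ψ z hψ0 hψ1 hz hxpos h hxz hyz
end

section
/- Fix parameters α > 0, γ > 0 with α + γ < 1, ξ > 1, ψ ∈ (0,1), λ_x > 0, λ_θ > 0, and z_t > 0, and set D := 1 + (1−α−γ)(ξ−1). Then the equation −λ = (((ξ−1)(γ−ψ(1−α))−ψ)/(γD))·(λ/λ_x)^ψ − ((1+(ξ−1)(1−α))/D)·z_t − λ_θ has a unique solution λ in [0,∞), and this solution is strictly positive. -/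
/-!
After rescaling, the equation reads `t + b t^ψ = K` with `K > 0`. For `t > 0` this is equivalent
to `t^(1-ψ) - K t^(-ψ) = -b`, whose left side is strictly increasing on `(0, ∞)` since `ψ < 1`; so
there is at most one positive root. `t = 0` is no root because `K ≠ 0`, and a root exists by the
intermediate value theorem, since `t + b t^ψ` vanishes at `0` and tends to `∞`.
-/

open Real Filter Set

section AddMulRpow

variable {ψ b K : ℝ}

lemma strictMonoOn_rpow_one_sub_sub_mul_rpow_neg (hψ0 : 0 ≤ ψ) (hψ1 : ψ < 1) (hK : 0 ≤ K) :
    StrictMonoOn (fun t : ℝ => t ^ (1 - ψ) - K * t ^ (-ψ)) (Ioi 0) := by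
  intro s hs t ht hst
  have hpow : s ^ (1 - ψ) < t ^ (1 - ψ) :=
    rpow_lt_rpow (le_of_lt hs) hst (by linarith)
  have hneg : t ^ (-ψ) ≤ s ^ (-ψ) :=
    antitoneOn_rpow_Ioi_of_exponent_nonpos (by linarith) hs ht hst.le
  dsimp only
  nlinarith [mul_le_mul_of_nonneg_left hneg hK]

lemma add_mul_rpow_eq_iff {t : ℝ} (ht : 0 < t) :
    t + b * t ^ ψ = K ↔ t ^ (1 - ψ) - K * t ^ (-ψ) = -b := by
  have htψ : 0 < t ^ ψ := rpow_pos_of_pos ht ψ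
  rw [sub_eq_add_neg (1 : ℝ), rpow_add ht, rpow_one, rpow_neg ht.le]
  constructor <;> intro h
  · rw [← h]; field_simp; ring
  · field_simp at h; linarith

lemma pos_of_add_mul_rpow_eq (hψ : 0 < ψ) (hK : 0 < K) {t : ℝ} (ht : 0 ≤ t)
    (h : t + b * t ^ ψ = K) : 0 < t := by
  refine ht.lt_of_ne fun h0 => hK.ne ?_
  rw [← h, ← h0, zero_rpow hψ.ne']
  ring

lemma tendsto_add_mul_rpow_atTop (hψ0 : 0 < ψ) (hψ1 : ψ < 1) :
    Tendsto (fun t : ℝ => t + b * t ^ ψ) atTop atTop := by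
  have hfactor : Tendsto (fun t : ℝ => t ^ ψ * (t ^ (1 - ψ) + b)) atTop atTop :=
    (tendsto_rpow_atTop hψ0).atTop_mul_atTop₀
      (tendsto_atTop_add_const_right _ b (tendsto_rpow_atTop (by linarith)))
  refine hfactor.congr' ?_
  filter_upwards [eventually_gt_atTop 0] with t ht
  rw [mul_add, ← rpow_add ht, add_sub_cancel, rpow_one, mul_comm]

lemma exists_add_mul_rpow_eq (hψ0 : 0 < ψ) (hψ1 : ψ < 1) (hK : 0 ≤ K) :
    ∃ t, 0 ≤ t ∧ t + b * t ^ ψ = K := by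
  obtain ⟨M, hM⟩ :=
    ((tendsto_add_mul_rpow_atTop (b := b) hψ0 hψ1).eventually_ge_atTop K).exists_forall_of_atTop
  have hcont : ContinuousOn (fun t : ℝ => t + b * t ^ ψ) (Icc 0 (max 0 M)) :=
    (continuous_id.add (continuous_const.mul (continuous_rpow_const hψ0.le))).continuousOn
  have hK_mem : K ∈ Icc (0 + b * 0 ^ ψ) (max 0 M + b * max 0 M ^ ψ) :=
    ⟨by simpa [zero_rpow hψ0.ne'] using hK, hM _ (le_max_right 0 M)⟩
  obtain ⟨t, ht, hroot⟩ := intermediate_value_Icc (le_max_left 0 M) hcont hK_mem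
  exact ⟨t, ht.1, hroot⟩

lemma existsUnique_add_mul_rpow_eq (hψ0 : 0 < ψ) (hψ1 : ψ < 1) (hK : 0 < K) :
    ∃! t, 0 ≤ t ∧ t + b * t ^ ψ = K := by
  obtain ⟨t, ht, hroot⟩ := exists_add_mul_rpow_eq (b := b) hψ0 hψ1 hK.le
  refine ⟨t, ⟨ht, hroot⟩, fun s ⟨hs, hsroot⟩ => ?_⟩
  have hs_pos := pos_of_add_mul_rpow_eq hψ0 hK hs hsroot
  have ht_pos := pos_of_add_mul_rpow_eq hψ0 hK ht hroot
  exact (strictMonoOn_rpow_one_sub_sub_mul_rpow_neg hψ0.le hψ1 hK.le).injOn hs_pos ht_pos <|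
    ((add_mul_rpow_eq_iff hs_pos).mp hsroot).trans ((add_mul_rpow_eq_iff ht_pos).mp hroot).symm

end AddMulRpow

lemma neg_eq_mul_div_rpow_sub_sub_iff {c ψ s a B t : ℝ} (hs : 0 < s) (ht : 0 ≤ t) :
    -t = c * (t / s) ^ ψ - a - B ↔ t + c / s ^ ψ * t ^ ψ = a + B := by
  rw [div_rpow ht hs.le, mul_div_assoc', div_mul_eq_mul_div]
  constructor <;> intro h <;> linarith

theorem stmt_1_general (α γ ξ ψ lamx lamθ zt : ℝ)
    (hγ : 0 < γ) (hαγ : α + γ < 1) (hξ : 1 < ξ)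
    (hψ0 : 0 < ψ) (hψ1 : ψ < 1) (hlamx : 0 < lamx) (hlamθ : 0 < lamθ)
    (hz : 0 < zt) :
    (∃! lam : ℝ, 0 ≤ lam ∧
        -lam = (((ξ - 1) * (γ - ψ * (1 - α)) - ψ) / (γ * (1 + (1 - α - γ) * (ξ - 1))))
            * (lam / lamx) ^ ψ
          - ((1 + (ξ - 1) * (1 - α)) / (1 + (1 - α - γ) * (ξ - 1))) * zt - lamθ) ∧
      ∀ lam : ℝ, 0 ≤ lam →
        (-lam = (((ξ - 1) * (γ - ψ * (1 - α)) - ψ) / (γ * (1 + (1 - α - γ) * (ξ - 1))))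
            * (lam / lamx) ^ ψ
          - ((1 + (ξ - 1) * (1 - α)) / (1 + (1 - α - γ) * (ξ - 1))) * zt - lamθ) →
        0 < lam := by
  have hD : 0 < 1 + (1 - α - γ) * (ξ - 1) := by nlinarith
  have hN : 0 < 1 + (ξ - 1) * (1 - α) := by nlinarith
  have hK : 0 < (1 + (ξ - 1) * (1 - α)) / (1 + (1 - α - γ) * (ξ - 1)) * zt + lamθ := by
    positivity
  generalize ((ξ - 1) * (γ - ψ * (1 - α)) - ψ) / (γ * (1 + (1 - α - γ) * (ξ - 1))) = c
  refine ⟨(existsUnique_congr fun lam => and_congr_right fun hlam =>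
      neg_eq_mul_div_rpow_sub_sub_iff hlamx hlam).mpr
    (existsUnique_add_mul_rpow_eq hψ0 hψ1 hK), fun lam hlam hroot => ?_⟩
  exact pos_of_add_mul_rpow_eq hψ0 hK hlam
    ((neg_eq_mul_div_rpow_sub_sub_iff hlamx hlam).mp hroot)

/-- The equilibrium job-distribution equation
`-λ = (((ξ-1)(γ-ψ(1-α))-ψ)/(γD)) (λ/λx)^ψ - ((1+(ξ-1)(1-α))/D) z_t - λθ`
with `D = 1+(1-α-γ)(ξ-1)` has a unique solution `λ ∈ [0,∞)`, and this solution
is strictly positive. -/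
theorem stmt_1 (α γ ξ ψ lamx lamθ zt : ℝ)
    (hα : 0 < α) (hγ : 0 < γ) (hαγ : α + γ < 1) (hξ : 1 < ξ)
    (hψ0 : 0 < ψ) (hψ1 : ψ < 1) (hlamx : 0 < lamx) (hlamθ : 0 < lamθ)
    (hz : 0 < zt) :
    (∃! lam : ℝ, 0 ≤ lam ∧
        -lam = (((ξ - 1) * (γ - ψ * (1 - α)) - ψ) / (γ * (1 + (1 - α - γ) * (ξ - 1))))
            * (lam / lamx) ^ ψ
          - ((1 + (ξ - 1) * (1 - α)) / (1 + (1 - α - γ) * (ξ - 1))) * zt - lamθ) ∧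
      ∀ lam : ℝ, 0 ≤ lam →
        (-lam = (((ξ - 1) * (γ - ψ * (1 - α)) - ψ) / (γ * (1 + (1 - α - γ) * (ξ - 1))))
            * (lam / lamx) ^ ψ
          - ((1 + (ξ - 1) * (1 - α)) / (1 + (1 - α - γ) * (ξ - 1))) * zt - lamθ) →
        0 < lam :=
  stmt_1_general α γ ξ ψ lamx lamθ zt hγ hαγ hξ hψ0 hψ1 hlamx hlamθ hz
end

section
/- Fix b ∈ ℝ, ψ ∈ (0,1), and z > 0. If x > 0 satisfies b·x^ψ + x = z, then 1 + b·ψ·x^(ψ−1) > 0. -/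
/-- If `x > 0` solves `b * x ^ ψ + x = z` with `z > 0` and `ψ ∈ (0,1)`, then
`1 + b * ψ * x ^ (ψ - 1) > 0`. -/
theorem stmt_4 (b ψ z x : ℝ) (hψ0 : 0 < ψ) (hψ1 : ψ < 1) (hz : 0 < z)
    (hx : 0 < x) (heq : b * x ^ ψ + x = z) :
    0 < 1 + b * ψ * x ^ (ψ - 1) := by
  have hxp : x ^ (ψ - 1) = x ^ ψ / x := by
    rw [Real.rpow_sub hx, Real.rpow_one]
  have h1 : -x < b * x ^ ψ := by linarith
  have h2 : -1 < b * x ^ ψ / x := by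
    rw [lt_div_iff₀ hx]; linarith
  rw [hxp]
  have h3 : -ψ < ψ * (b * x ^ ψ / x) := by
    have := mul_lt_mul_of_pos_left h2 hψ0
    linarith
  have : b * ψ * (x ^ ψ / x) = ψ * (b * x ^ ψ / x) := by ring
  linarith [this ▸ h3]
end

section
/- Fix parameters α > 0, γ > 0 with α + γ < 1, ξ > 1, ψ ∈ (0,1), λ_x > 0, λ_θ > 0, and set D := 1 + (1−α−γ)(ξ−1). For z_t > 0 let λ_t(z_t) denote the unique solution in [0,∞) of −λ = (((ξ−1)(γ−ψ(1−α))−ψ)/(γD))·(λ/λ_x)^ψ − ((1+(ξ−1)(1−α))/D)·z_t − λ_θ. Then wage inequality Var(log w) = (ψ/γ)²·λ_x^(−2ψ)·λ_t(z_t)^(2ψ−2) is strictly decreasing in z_t: if 0 < z₁ < z₂ then (ψ/γ)²·λ_x^(−2ψ)·λ_t(z₁)^(2ψ−2) > (ψ/γ)²·λ_x^(−2ψ)·λ_t(z₂)^(2ψ−2). -/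
/-- Wage inequality `(ψ/γ)² λx^(-2ψ) λ_t^(2ψ-2)` is strictly decreasing in the
market efficiency wedge `z_t`, where `λ_t(z_t)` is the unique nonnegative
solution of the equilibrium job-distribution equation. -/
theorem stmt_5 (α γ ξ ψ lamx lamθ : ℝ)
    (hα : 0 < α) (hγ : 0 < γ) (hαγ : α + γ < 1) (hξ : 1 < ξ)
    (hψ0 : 0 < ψ) (hψ1 : ψ < 1) (hlamx : 0 < lamx) (hlamθ : 0 < lamθ)
    (z₁ z₂ l₁ l₂ : ℝ) (hz₁ : 0 < z₁) (hz₁₂ : z₁ < z₂)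
    (hl₁ : 0 ≤ l₁) (hl₂ : 0 ≤ l₂)
    (heq₁ : -l₁ = (((ξ - 1) * (γ - ψ * (1 - α)) - ψ) / (γ * (1 + (1 - α - γ) * (ξ - 1))))
          * (l₁ / lamx) ^ ψ
        - ((1 + (ξ - 1) * (1 - α)) / (1 + (1 - α - γ) * (ξ - 1))) * z₁ - lamθ)
    (heq₂ : -l₂ = (((ξ - 1) * (γ - ψ * (1 - α)) - ψ) / (γ * (1 + (1 - α - γ) * (ξ - 1))))
          * (l₂ / lamx) ^ ψ
        - ((1 + (ξ - 1) * (1 - α)) / (1 + (1 - α - γ) * (ξ - 1))) * z₂ - lamθ) :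
    (ψ / γ) ^ 2 * lamx ^ (-(2 * ψ)) * l₂ ^ (2 * ψ - 2)
      < (ψ / γ) ^ 2 * lamx ^ (-(2 * ψ)) * l₁ ^ (2 * ψ - 2) := by
  set D : ℝ := 1 + (1 - α - γ) * (ξ - 1) with hDdef
  have hD : 0 < D := by
    have : 0 < (1 - α - γ) * (ξ - 1) := by nlinarith
    nlinarith
  set B : ℝ := (1 + (ξ - 1) * (1 - α)) / D with hBdef
  have hB : 0 < B := by
    apply div_pos _ hD
    nlinarith
  set k : ℝ := (((ξ - 1) * (γ - ψ * (1 - α)) - ψ) / (γ * D)) / lamx ^ ψ with hkdef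
  rw [Real.div_rpow hl₁ hlamx.le] at heq₁
  rw [Real.div_rpow hl₂ hlamx.le] at heq₂
  have hE₁ : l₁ + k * l₁ ^ ψ = B * z₁ + lamθ := by
    rw [hkdef, hBdef]; linear_combination -heq₁
  have hE₂ : l₂ + k * l₂ ^ ψ = B * z₂ + lamθ := by
    rw [hkdef, hBdef]; linear_combination -heq₂
  have hpos₁ : 0 < B * z₁ + lamθ := by nlinarith [mul_pos hB hz₁]
  have hpos₂ : 0 < B * z₂ + lamθ := by nlinarith [mul_pos hB (hz₁.trans hz₁₂)]
  -- the solutions are strictly positive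
  have hl₁pos : 0 < l₁ := by
    rcases hl₁.lt_or_eq with h | h
    · exact h
    · exfalso; rw [← h, Real.zero_rpow hψ0.ne'] at hE₁; simp at hE₁; linarith
  have hl₂pos : 0 < l₂ := by
    rcases hl₂.lt_or_eq with h | h
    · exact h
    · exfalso; rw [← h, Real.zero_rpow hψ0.ne'] at hE₂; simp at hE₂; linarith
  -- monotonicity: l₁ < l₂
  have hll : l₁ < l₂ := by
    by_contra h
    push_neg at h  -- h : l₂ ≤ l₁
    have hrp : l₂ ^ ψ ≤ l₁ ^ ψ := Real.rpow_le_rpow hl₂ h hψ0.le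
    have hkey : B * (z₁ - z₂) = (l₁ - l₂) + k * (l₁ ^ ψ - l₂ ^ ψ) := by
      linarith [hE₁, hE₂, mul_sub k (l₁ ^ ψ) (l₂ ^ ψ)]
    have hneg : B * (z₁ - z₂) < 0 := by
      have := mul_lt_mul_of_pos_left (sub_neg.mpr hz₁₂) hB
      simpa using this
    rcases le_or_gt 0 k with hk | hk
    · nlinarith
    · -- k < 0 case: use g(l₂) > 0 and Bernoulli
      -- from hE₂ : -k * l₂^ψ < l₂, i.e. -k < l₂^(1-ψ)
      have hl₂ψ : 0 < l₂ ^ ψ := Real.rpow_pos_of_pos hl₂pos ψ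
      have hnk : -k < l₂ ^ (1 - ψ) := by
        have h1 : -k * l₂ ^ ψ < l₂ := by linarith
        have h2 : l₂ ^ (1 - ψ) * l₂ ^ ψ = l₂ := by
          rw [← Real.rpow_add hl₂pos]; simp
        exact lt_of_mul_lt_mul_right (by rw [h2]; exact h1) hl₂ψ.le
      -- Bernoulli: l₁^ψ - l₂^ψ ≤ ψ * l₂^(ψ-1) * (l₁ - l₂)
      have hbern : l₁ ^ ψ - l₂ ^ ψ ≤ ψ * l₂ ^ (ψ - 1) * (l₁ - l₂) := by
        have hs : (-1 : ℝ) ≤ l₁ / l₂ - 1 := by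
          have : 0 ≤ l₁ / l₂ := by positivity
          linarith
        have hb := rpow_one_add_le_one_add_mul_self hs hψ0.le hψ1.le
        have h1s : 1 + (l₁ / l₂ - 1) = l₁ / l₂ := by ring
        rw [h1s] at hb
        -- hb : (l₁/l₂)^ψ ≤ 1 + ψ * (l₁/l₂ - 1)
        have hmul := mul_le_mul_of_nonneg_right hb hl₂ψ.le
        have hL : (l₁ / l₂) ^ ψ * l₂ ^ ψ = l₁ ^ ψ := by
          rw [Real.div_rpow hl₁ hl₂]; field_simp
        have hR : (1 + ψ * (l₁ / l₂ - 1)) * l₂ ^ ψ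
            = l₂ ^ ψ + ψ * l₂ ^ (ψ - 1) * (l₁ - l₂) := by
          have h2 : l₂ ^ (ψ - 1) = l₂ ^ ψ / l₂ := by
            rw [Real.rpow_sub hl₂pos, Real.rpow_one]
          rw [h2]; field_simp
        rw [hL, hR] at hmul
        linarith
      -- combine
      have hψl : 0 < l₂ ^ (ψ - 1) := Real.rpow_pos_of_pos hl₂pos _
      have hd : 0 ≤ l₁ - l₂ := by linarith
      have hcomb : -k * (l₁ ^ ψ - l₂ ^ ψ) ≤ l₂ ^ (1 - ψ) * (ψ * l₂ ^ (ψ - 1) * (l₁ - l₂)) := by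
        apply mul_le_mul hnk.le hbern (by linarith) (by positivity)
      have hprod : l₂ ^ (1 - ψ) * l₂ ^ (ψ - 1) = 1 := by
        rw [← Real.rpow_add hl₂pos]; norm_num
      have : l₂ ^ (1 - ψ) * (ψ * l₂ ^ (ψ - 1) * (l₁ - l₂)) = ψ * (l₁ - l₂) := by
        calc l₂ ^ (1 - ψ) * (ψ * l₂ ^ (ψ - 1) * (l₁ - l₂))
            = (l₂ ^ (1 - ψ) * l₂ ^ (ψ - 1)) * (ψ * (l₁ - l₂)) := by ring
          _ = ψ * (l₁ - l₂) := by rw [hprod]; ring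
      rw [this] at hcomb
      have h5 : ψ * (l₁ - l₂) ≤ 1 * (l₁ - l₂) := mul_le_mul_of_nonneg_right hψ1.le hd
      linarith
  -- final inequality
  have hexp : 2 * ψ - 2 < 0 := by linarith
  have hrpow : l₂ ^ (2 * ψ - 2) < l₁ ^ (2 * ψ - 2) :=
    Real.rpow_lt_rpow_of_neg hl₁pos hll hexp
  have hC : 0 < (ψ / γ) ^ 2 * lamx ^ (-(2 * ψ)) := by positivity
  exact mul_lt_mul_of_pos_left hrpow hC
end

section
/- Fix parameters α > 0, γ > 0 with α + γ < 1, ξ > 1, ψ ∈ (0,1), λ_x > 0, λ_θ > 0, and set D := 1 + (1−α−γ)(ξ−1). For z_t > 0 let λ_t(z_t) denote the unique solution in [0,∞) of −λ = (((ξ−1)(γ−ψ(1−α))−ψ)/(γD))·(λ/λ_x)^ψ − ((1+(ξ−1)(1−α))/D)·z_t − λ_θ. Then the dispersion of log quantity productivity Var(log TFPQ) = (λ_t(z_t)/λ_x)^(2ψ)·λ_θ^(−2) is strictly increasing in z_t: if 0 < z₁ < z₂ then (λ_t(z₁)/λ_x)^(2ψ)·λ_θ^(−2) < (λ_t(z₂)/λ_x)^(2ψ)·λ_θ^(−2).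 -/
/-- The dispersion of log quantity productivity `(λ_t/λx)^(2ψ) λθ⁻²` is
strictly increasing in the market efficiency wedge `z_t`, where `λ_t(z_t)` is
the unique nonnegative solution of the equilibrium job-distribution equation. -/
theorem stmt_6 (α γ ξ ψ lamx lamθ : ℝ)
    (hα : 0 < α) (hγ : 0 < γ) (hαγ : α + γ < 1) (hξ : 1 < ξ)
    (hψ0 : 0 < ψ) (hψ1 : ψ < 1) (hlamx : 0 < lamx) (hlamθ : 0 < lamθ)
    (z₁ z₂ l₁ l₂ : ℝ) (hz₁ : 0 < z₁) (hz₁₂ : z₁ < z₂)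
    (hl₁ : 0 ≤ l₁) (hl₂ : 0 ≤ l₂)
    (heq₁ : -l₁ = (((ξ - 1) * (γ - ψ * (1 - α)) - ψ) / (γ * (1 + (1 - α - γ) * (ξ - 1))))
          * (l₁ / lamx) ^ ψ
        - ((1 + (ξ - 1) * (1 - α)) / (1 + (1 - α - γ) * (ξ - 1))) * z₁ - lamθ)
    (heq₂ : -l₂ = (((ξ - 1) * (γ - ψ * (1 - α)) - ψ) / (γ * (1 + (1 - α - γ) * (ξ - 1))))
          * (l₂ / lamx) ^ ψ
        - ((1 + (ξ - 1) * (1 - α)) / (1 + (1 - α - γ) * (ξ - 1))) * z₂ - lamθ) :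
    (l₁ / lamx) ^ (2 * ψ) * lamθ ^ (-(2 : ℝ))
      < (l₂ / lamx) ^ (2 * ψ) * lamθ ^ (-(2 : ℝ)) := by
  set C : ℝ := ((ξ - 1) * (γ - ψ * (1 - α)) - ψ) / (γ * (1 + (1 - α - γ) * (ξ - 1))) with hC
  set B : ℝ := (1 + (ξ - 1) * (1 - α)) / (1 + (1 - α - γ) * (ξ - 1)) with hBdef
  have hD : 0 < 1 + (1 - α - γ) * (ξ - 1) := by nlinarith
  have hB : 0 < B := by
    apply div_pos ?_ hD
    nlinarith
  set u : ℝ := l₁ / lamx with hu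
  set v : ℝ := l₂ / lamx with hv
  have hu0 : 0 ≤ u := div_nonneg hl₁ hlamx.le
  have hv0 : 0 ≤ v := div_nonneg hl₂ hlamx.le
  have hg₁ : l₁ + C * u ^ ψ = B * z₁ + lamθ := by linarith [heq₁]
  have hg₂ : l₂ + C * v ^ ψ = B * z₂ + lamθ := by linarith [heq₂]
  have hkey : l₁ + C * u ^ ψ < l₂ + C * v ^ ψ := by
    rw [hg₁, hg₂]
    have := mul_lt_mul_of_pos_left hz₁₂ hB
    linarith
  -- main step : l₁ < l₂
  have hl₁l₂ : l₁ < l₂ := by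
    by_contra h
    push_neg at h  -- h : l₂ ≤ l₁
    have hvu : v ≤ u := by
      rw [hv, hu]; gcongr
    have hpowle : v ^ ψ ≤ u ^ ψ := Real.rpow_le_rpow hv0 hvu hψ0.le
    rcases le_or_gt 0 C with hCpos | hCneg
    · -- C ≥ 0 : left side is monotone, contradiction
      nlinarith [mul_nonneg hCpos (sub_nonneg.2 hpowle)]
    · -- C < 0
      have hne : l₂ < l₁ := by
        rcases lt_or_eq_of_le h with h' | h'
        · exact h'
        · exfalso
          have huv' : v = u := by rw [hv, hu, h']
          rw [huv', h'] at hkey; exact lt_irrefl _ hkey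
      have hvu' : v < u := by
        rw [hv, hu, div_lt_div_iff_of_pos_right hlamx]; exact hne
      have hu_pos : 0 < u := lt_of_le_of_lt hv0 hvu'
      have hpow_lt : v ^ ψ < u ^ ψ := Real.rpow_lt_rpow hv0 hvu' hψ0
      have hupψ : 0 < u ^ ψ := Real.rpow_pos_of_pos hu_pos ψ
      have hl1eq : l₁ = u * lamx := by rw [hu]; field_simp
      have hl2eq : l₂ = v * lamx := by rw [hv]; field_simp
      have hpos : 0 < l₁ + C * u ^ ψ := by
        rw [hg₁]; have := mul_pos hB hz₁; linarith
      have hsplit_u : u ^ (1 - ψ) * u ^ ψ = u := by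
        rw [← Real.rpow_add hu_pos]; norm_num
      have hK2 : -C < lamx * u ^ (1 - ψ) := by
        have h1 : (-C) * u ^ ψ < (lamx * u ^ (1 - ψ)) * u ^ ψ := by
          rw [mul_assoc, hsplit_u]; nlinarith [hpos, hl1eq]
        exact lt_of_mul_lt_mul_right h1 hupψ.le
      have hchain : lamx * (u - v) < lamx * u ^ (1 - ψ) * (u ^ ψ - v ^ ψ) := by
        have h2 : (-C) * (u ^ ψ - v ^ ψ) < lamx * u ^ (1 - ψ) * (u ^ ψ - v ^ ψ) :=
          mul_lt_mul_of_pos_right hK2 (sub_pos.2 hpow_lt)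
        have hexp : (-C) * (u ^ ψ - v ^ ψ) = C * v ^ ψ - C * u ^ ψ := by ring
        rw [hexp] at h2
        have h3 : lamx * (u - v) = u * lamx - v * lamx := by ring
        linarith
      have hmain : u ^ (1 - ψ) * v ^ ψ < v := by
        have : lamx * u ^ (1 - ψ) * (u ^ ψ - v ^ ψ)
            = lamx * (u - u ^ (1 - ψ) * v ^ ψ) := by linear_combination lamx * hsplit_u
        rw [this] at hchain
        have h6 := lt_of_mul_lt_mul_left hchain hlamx.le
        linarith
      rcases eq_or_lt_of_le hv0 with hv0' | hv0'
      · rw [← hv0', Real.zero_rpow hψ0.ne', mul_zero] at hmain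
        exact lt_irrefl 0 hmain
      · have hsplit_v : v ^ (1 - ψ) * v ^ ψ = v := by
          rw [← Real.rpow_add hv0']; norm_num
        have hvpψ : 0 < v ^ ψ := Real.rpow_pos_of_pos hv0' ψ
        have h3 : u ^ (1 - ψ) * v ^ ψ < v ^ (1 - ψ) * v ^ ψ := by rw [hsplit_v]; exact hmain
        have h4 : u ^ (1 - ψ) < v ^ (1 - ψ) := lt_of_mul_lt_mul_right h3 hvpψ.le
        have h5 : v ^ (1 - ψ) ≤ u ^ (1 - ψ) := Real.rpow_le_rpow hv0 hvu (by linarith)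
        linarith
  have huv : u < v := by
    rw [hu, hv, div_lt_div_iff_of_pos_right hlamx]
    exact hl₁l₂
  have h2ψ : 0 < 2 * ψ := by linarith
  have hlt : u ^ (2 * ψ) < v ^ (2 * ψ) := Real.rpow_lt_rpow hu0 huv h2ψ
  exact mul_lt_mul_of_pos_right hlt (Real.rpow_pos_of_pos hlamθ _)
end

section
/- Fix parameters α > 0, γ > 0 with α + γ < 1, ξ > 1, ψ ∈ [0,1], λ_x > 0, and z_t > 0, and set D := 1 + (1−α−γ)(ξ−1), η^Q := ξ/D, and η^Q_θ := −γ·z_t + (1−ψ)·(λ_t/λ_x)^ψ for any λ_t ≥ 0. Then (λ_t/λ_x)^ψ − (η^Q·η^Q_θ)/ξ = (1 − (1−ψ)/D)·(λ_t/λ_x)^ψ + (γ/D)·z_t, and this quantity is strictly positive. -/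
/-- The coefficient on firm type in log TFPR:
`(λ_t/λx)^ψ - η^Q η^Q_θ / ξ = (1 - (1-ψ)/D) (λ_t/λx)^ψ + (γ/D) z_t`, and this
quantity is strictly positive, where `D = 1+(1-α-γ)(ξ-1)`, `η^Q = ξ/D` and
`η^Q_θ = -γ z_t + (1-ψ)(λ_t/λx)^ψ`. -/
theorem stmt_7 (α γ ξ ψ lamx zt lamt : ℝ)
    (hα : 0 < α) (hγ : 0 < γ) (hαγ : α + γ < 1) (hξ : 1 < ξ)
    (hψ0 : 0 ≤ ψ) (hψ1 : ψ ≤ 1) (hlamx : 0 < lamx) (hz : 0 < zt)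
    (hlamt : 0 ≤ lamt) :
    (lamt / lamx) ^ ψ
        - (ξ / (1 + (1 - α - γ) * (ξ - 1)))
          * (-γ * zt + (1 - ψ) * (lamt / lamx) ^ ψ) / ξ
      = (1 - (1 - ψ) / (1 + (1 - α - γ) * (ξ - 1))) * (lamt / lamx) ^ ψ
        + (γ / (1 + (1 - α - γ) * (ξ - 1))) * zt ∧
      0 < (lamt / lamx) ^ ψ
        - (ξ / (1 + (1 - α - γ) * (ξ - 1)))
          * (-γ * zt + (1 - ψ) * (lamt / lamx) ^ ψ) / ξ := by
  have hD : 1 < 1 + (1 - α - γ) * (ξ - 1) := by nlinarith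
  have hD0 : (0:ℝ) < 1 + (1 - α - γ) * (ξ - 1) := by linarith
  have hξ0 : ξ ≠ 0 := by positivity
  set x := (lamt / lamx) ^ ψ with hx
  have hx0 : 0 ≤ x := Real.rpow_nonneg (by positivity) ψ
  have heq : x - (ξ / (1 + (1 - α - γ) * (ξ - 1)))
          * (-γ * zt + (1 - ψ) * x) / ξ
      = (1 - (1 - ψ) / (1 + (1 - α - γ) * (ξ - 1))) * x
        + (γ / (1 + (1 - α - γ) * (ξ - 1))) * zt := by
    field_simp
    ring
  refine ⟨heq, ?_⟩
  rw [heq]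
  have h1 : 0 ≤ 1 - (1 - ψ) / (1 + (1 - α - γ) * (ξ - 1)) := by
    rw [sub_nonneg, div_le_one hD0]; linarith
  have h2 : 0 < (γ / (1 + (1 - α - γ) * (ξ - 1))) * zt := by positivity
  nlinarith [mul_nonneg h1 hx0]
end

section
/- Fix parameters α > 0, γ > 0 with α + γ < 1, ξ > 1, ψ ∈ (0,1), λ_x > 0, λ_θ > 0, σ₁ ≥ 0, σ₂ ≥ 0, and set D := 1 + (1−α−γ)(ξ−1), η^Q := ξ/D. For z_t > 0 let λ_t(z_t) denote the unique solution in [0,∞) of −λ = (((ξ−1)(γ−ψ(1−α))−ψ)/(γD))·(λ/λ_x)^ψ − ((1+(ξ−1)(1−α))/D)·z_t − λ_θ, and set η^Q_θ(z_t) := −γ·z_t + (1−ψ)·(λ_t(z_t)/λ_x)^ψ. Then the dispersion of log revenue productivity Var(log TFPR) = [(λ_t(z_t)/λ_x)^ψ − η^Q·η^Q_θ(z_t)/ξ]²·λ_θ^(−2) + (η^Q/ξ)²·(γ²σ₁² + α²σ₂²) is strictly increasing in z_t: if 0 < z₁ < z₂ then its value at z₁ is strictly smaller than its value at z₂. -/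
/-!
Write `x(l) = (l/λx)^ψ`, so that the equilibrium equation reads `l + A x(l) = B z + λθ` with
`B > 0`. The left side is increasing on its nonnegative part even when `A < 0`, because
`x(t l) = t^ψ x(l) ≥ t x(l)` for `t ∈ [0,1]`; hence `λ_t` and `x(λ_t)` increase with `z`.
The TFPR slope simplifies to `((D - 1 + ψ) x + γ z) / D` with `D ≥ 1`, which is therefore
positive and strictly increasing in `z`, and so is its square. The idiosyncratic term does not
depend on `z`.
-/

open Real

theorem add_mul_div_rpow_le_of_le {a k ψ m l : ℝ} (hk : 0 ≤ k) (hψ0 : 0 ≤ ψ) (hψ1 : ψ ≤ 1)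
    (hm : 0 ≤ m) (hml : m ≤ l) (hl : 0 ≤ l + a * (l / k) ^ ψ) :
    m + a * (m / k) ^ ψ ≤ l + a * (l / k) ^ ψ := by
  rcases le_or_gt 0 a with ha | ha
  · have : a * (m / k) ^ ψ ≤ a * (l / k) ^ ψ := by gcongr
    linarith
  rcases (hm.trans hml).eq_or_lt with hl0 | hl0
  · obtain rfl : m = l := le_antisymm hml (hl0 ▸ hm)
    exact le_rfl
  set t := m / l
  have ht0 : 0 ≤ t := div_nonneg hm hl0.le
  have ht1 : t ≤ 1 := (div_le_one hl0).mpr hml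
  have hm_eq : m = t * l := (div_mul_cancel₀ m hl0.ne').symm
  have hx_eq : (m / k) ^ ψ = t ^ ψ * (l / k) ^ ψ := by
    rw [hm_eq, mul_div_assoc, mul_rpow ht0 (div_nonneg hl0.le hk)]
  have hx_ge : t * (l / k) ^ ψ ≤ (m / k) ^ ψ := by
    rw [hx_eq]
    exact mul_le_mul_of_nonneg_right (self_le_rpow_of_le_one ht0 ht1 hψ1)
      (rpow_nonneg (div_nonneg hl0.le hk) ψ)
  calc m + a * (m / k) ^ ψ ≤ t * (l + a * (l / k) ^ ψ) := by nlinarith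
    _ ≤ l + a * (l / k) ^ ψ := mul_le_of_le_one_left hl ht1

theorem le_of_add_mul_div_rpow_eq {a k ψ l₁ l₂ c₁ c₂ : ℝ} (hk : 0 ≤ k) (hψ0 : 0 ≤ ψ)
    (hψ1 : ψ ≤ 1) (hl₂ : 0 ≤ l₂) (hc₁ : 0 ≤ c₁) (hc : c₁ < c₂)
    (h₁ : l₁ + a * (l₁ / k) ^ ψ = c₁) (h₂ : l₂ + a * (l₂ / k) ^ ψ = c₂) : l₁ ≤ l₂ := by
  by_contra! hlt
  have := add_mul_div_rpow_le_of_le hk hψ0 hψ1 hl₂ hlt.le (h₁ ▸ hc₁)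
  linarith

theorem tfpr_theta_coeff_eq {ξ D γ ψ : ℝ} (hξ : ξ ≠ 0) (hD : D ≠ 0) (x z : ℝ) :
    x - ξ / D * (-γ * z + (1 - ψ) * x) / ξ = ((D - 1 + ψ) * x + γ * z) / D := by
  field_simp
  ring

theorem stmt_8_general (α γ ξ ψ lamx lamθ σ₁ σ₂ : ℝ)
    (hγ : 0 < γ) (hαγ : α + γ < 1) (hξ : 1 < ξ)
    (hψ0 : 0 < ψ) (hψ1 : ψ < 1) (hlamx : 0 < lamx) (hlamθ : 0 < lamθ)
    (z₁ z₂ l₁ l₂ : ℝ) (hz₁ : 0 < z₁) (hz₁₂ : z₁ < z₂)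
    (hl₁ : 0 ≤ l₁) (hl₂ : 0 ≤ l₂)
    (heq₁ : -l₁ = (((ξ - 1) * (γ - ψ * (1 - α)) - ψ) / (γ * (1 + (1 - α - γ) * (ξ - 1))))
          * (l₁ / lamx) ^ ψ
        - ((1 + (ξ - 1) * (1 - α)) / (1 + (1 - α - γ) * (ξ - 1))) * z₁ - lamθ)
    (heq₂ : -l₂ = (((ξ - 1) * (γ - ψ * (1 - α)) - ψ) / (γ * (1 + (1 - α - γ) * (ξ - 1))))
          * (l₂ / lamx) ^ ψ
        - ((1 + (ξ - 1) * (1 - α)) / (1 + (1 - α - γ) * (ξ - 1))) * z₂ - lamθ) :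
    ((l₁ / lamx) ^ ψ
          - (ξ / (1 + (1 - α - γ) * (ξ - 1)))
            * (-γ * z₁ + (1 - ψ) * (l₁ / lamx) ^ ψ) / ξ) ^ 2 * lamθ ^ (-(2 : ℝ))
        + ((ξ / (1 + (1 - α - γ) * (ξ - 1))) / ξ) ^ 2
          * (γ ^ 2 * σ₁ ^ 2 + α ^ 2 * σ₂ ^ 2)
      < ((l₂ / lamx) ^ ψ
          - (ξ / (1 + (1 - α - γ) * (ξ - 1)))
            * (-γ * z₂ + (1 - ψ) * (l₂ / lamx) ^ ψ) / ξ) ^ 2 * lamθ ^ (-(2 : ℝ))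
        + ((ξ / (1 + (1 - α - γ) * (ξ - 1))) / ξ) ^ 2
          * (γ ^ 2 * σ₁ ^ 2 + α ^ 2 * σ₂ ^ 2) := by
  set D := 1 + (1 - α - γ) * (ξ - 1)
  set A := ((ξ - 1) * (γ - ψ * (1 - α)) - ψ) / (γ * D)
  set B := (1 + (ξ - 1) * (1 - α)) / D
  have hD : 1 ≤ D := by nlinarith
  have hB : 0 < B := div_pos (by nlinarith) (by linarith)
  have hl : l₁ ≤ l₂ :=
    le_of_add_mul_div_rpow_eq (a := A) (c₁ := B * z₁ + lamθ) (c₂ := B * z₂ + lamθ)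
      hlamx.le hψ0.le hψ1.le hl₂ (by positivity) (by gcongr) (by linarith) (by linarith)
  have hx₁ : 0 ≤ (l₁ / lamx) ^ ψ := by positivity
  have hx : (l₁ / lamx) ^ ψ ≤ (l₂ / lamx) ^ ψ := by gcongr
  set x₁ := (l₁ / lamx) ^ ψ
  set x₂ := (l₂ / lamx) ^ ψ
  have hψD : 0 ≤ D - 1 + ψ := by linarith
  rw [tfpr_theta_coeff_eq (by linarith) (by linarith), tfpr_theta_coeff_eq (by linarith) (by linarith)]
  have hT₁ : 0 < ((D - 1 + ψ) * x₁ + γ * z₁) / D :=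
    div_pos (add_pos_of_nonneg_of_pos (mul_nonneg hψD hx₁) (mul_pos hγ hz₁)) (by linarith)
  have hT : ((D - 1 + ψ) * x₁ + γ * z₁) / D < ((D - 1 + ψ) * x₂ + γ * z₂) / D := by
    gcongr ?_ / _
    exact add_lt_add_of_le_of_lt (by gcongr) (by gcongr)
  gcongr

/-- The dispersion of log revenue productivity
`[(λ_t/λx)^ψ - η^Q η^Q_θ/ξ]² λθ⁻² + (η^Q/ξ)² (γ²σ₁² + α²σ₂²)` is strictly
increasing in the market efficiency wedge `z_t`, where `λ_t(z_t)` is the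
unique nonnegative solution of the equilibrium job-distribution equation,
`D = 1+(1-α-γ)(ξ-1)`, `η^Q = ξ/D`, `η^Q_θ(z) = -γ z + (1-ψ)(λ_t(z)/λx)^ψ`. -/
theorem stmt_8 (α γ ξ ψ lamx lamθ σ₁ σ₂ : ℝ)
    (hα : 0 < α) (hγ : 0 < γ) (hαγ : α + γ < 1) (hξ : 1 < ξ)
    (hψ0 : 0 < ψ) (hψ1 : ψ < 1) (hlamx : 0 < lamx) (hlamθ : 0 < lamθ)
    (hσ₁ : 0 ≤ σ₁) (hσ₂ : 0 ≤ σ₂)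
    (z₁ z₂ l₁ l₂ : ℝ) (hz₁ : 0 < z₁) (hz₁₂ : z₁ < z₂)
    (hl₁ : 0 ≤ l₁) (hl₂ : 0 ≤ l₂)
    (heq₁ : -l₁ = (((ξ - 1) * (γ - ψ * (1 - α)) - ψ) / (γ * (1 + (1 - α - γ) * (ξ - 1))))
          * (l₁ / lamx) ^ ψ
        - ((1 + (ξ - 1) * (1 - α)) / (1 + (1 - α - γ) * (ξ - 1))) * z₁ - lamθ)
    (heq₂ : -l₂ = (((ξ - 1) * (γ - ψ * (1 - α)) - ψ) / (γ * (1 + (1 - α - γ) * (ξ - 1))))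
          * (l₂ / lamx) ^ ψ
        - ((1 + (ξ - 1) * (1 - α)) / (1 + (1 - α - γ) * (ξ - 1))) * z₂ - lamθ) :
    ((l₁ / lamx) ^ ψ
          - (ξ / (1 + (1 - α - γ) * (ξ - 1)))
            * (-γ * z₁ + (1 - ψ) * (l₁ / lamx) ^ ψ) / ξ) ^ 2 * lamθ ^ (-(2 : ℝ))
        + ((ξ / (1 + (1 - α - γ) * (ξ - 1))) / ξ) ^ 2
          * (γ ^ 2 * σ₁ ^ 2 + α ^ 2 * σ₂ ^ 2)
      < ((l₂ / lamx) ^ ψ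
          - (ξ / (1 + (1 - α - γ) * (ξ - 1)))
            * (-γ * z₂ + (1 - ψ) * (l₂ / lamx) ^ ψ) / ξ) ^ 2 * lamθ ^ (-(2 : ℝ))
        + ((ξ / (1 + (1 - α - γ) * (ξ - 1))) / ξ) ^ 2
          * (γ ^ 2 * σ₁ ^ 2 + α ^ 2 * σ₂ ^ 2) :=
  stmt_8_general α γ ξ ψ lamx lamθ σ₁ σ₂ hγ hαγ hξ hψ0 hψ1 hlamx hlamθ z₁ z₂ l₁ l₂ hz₁ hz₁₂ hl₁ hl₂
    heq₁ heq₂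
end

section
/- Fix b ∈ ℝ, ψ ∈ (0,1), λ_x > 0, d > 0, and z > 0. For λ_θ > 0 let λ(λ_θ) denote the unique solution in [0,∞) of −λ = b·(λ/λ_x)^ψ − d·z − λ_θ. Then the quantity B(λ_θ) := (λ(λ_θ)/λ_x)^(2ψ)·λ_θ^(−2) is strictly decreasing in λ_θ: if 0 < λ_θ₁ < λ_θ₂ then B(λ_θ₁) > B(λ_θ₂). -/
/-!
Write `x = λ/λx` and `c = d z`, so that the equilibrium equation reads `λθ = λx x + b x^ψ - c`.
Dividing by `x^ψ` gives `λθ / x^ψ = λx x^(1-ψ) + b - c x^(-ψ)`, which is strictly increasing in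
`x > 0`. Where it is positive, `λθ` is the product of two increasing positive factors, so `λθ ↦ x` is
increasing; hence `λθ / x^ψ` increases with `λθ`, and `B = (x^ψ / λθ)^2` decreases.
-/

open Real Set

namespace EquilibriumDispersion

variable {a b c ψ x θ : ℝ}

/-- `λθ / x^ψ` along the equilibrium curve `λθ = a x + b x^ψ - c`. -/
noncomputable def ratio (a b c ψ x : ℝ) : ℝ := a * x ^ (1 - ψ) + b - c * x ^ (-ψ)

lemma rpow_mul_ratio (hx : 0 < x) : x ^ ψ * ratio a b c ψ x = a * x + b * x ^ ψ - c := by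
  have h₁ : x ^ ψ * x ^ (1 - ψ) = x := by rw [← rpow_add hx, add_sub_cancel, rpow_one]
  have h₂ : x ^ ψ * x ^ (-ψ) = 1 := by rw [← rpow_add hx, add_neg_cancel, rpow_zero]
  unfold ratio
  linear_combination a * h₁ - c * h₂

lemma ratio_strictMonoOn (ha : 0 < a) (hc : 0 ≤ c) (hψ0 : 0 ≤ ψ) (hψ1 : ψ < 1) :
    StrictMonoOn (ratio a b c ψ) (Ioi 0) := by
  intro x (hx : 0 < x) y _ hxy
  have hpow : x ^ (1 - ψ) < y ^ (1 - ψ) := rpow_lt_rpow hx.le hxy (by linarith)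
  have hneg : y ^ (-ψ) ≤ x ^ (-ψ) := rpow_le_rpow_of_nonpos hx hxy.le (by linarith)
  unfold ratio
  nlinarith [mul_le_mul_of_nonneg_left hneg hc]

lemma pos_of_equilibrium (hψ : 0 < ψ) (hx : 0 ≤ x) (h : θ = a * x + b * x ^ ψ - c)
    (hθ : -c < θ) : 0 < x := by
  refine hx.lt_of_ne fun hx0 => ?_
  rw [← hx0, zero_rpow hψ.ne'] at h
  linarith

lemma ratio_pos (hx : 0 < x) (h : θ = a * x + b * x ^ ψ - c) (hθ : 0 < θ) :
    0 < ratio a b c ψ x := by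
  rw [← rpow_mul_ratio hx] at h
  exact pos_of_mul_pos_right (h ▸ hθ) (rpow_pos_of_pos hx ψ).le

section Comparison

variable {x₁ x₂ θ₁ θ₂ : ℝ} (ha : 0 < a) (hc : 0 ≤ c) (hψ0 : 0 < ψ) (hψ1 : ψ < 1)
  (hx₁ : 0 < x₁) (hx₂ : 0 < x₂)
  (h₁ : θ₁ = a * x₁ + b * x₁ ^ ψ - c) (h₂ : θ₂ = a * x₂ + b * x₂ ^ ψ - c)
  (hθ₁ : 0 < θ₁) (hθ : θ₁ < θ₂)
include ha hc hψ0 hψ1 hx₁ hx₂ h₁ h₂ hθ₁ hθ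

lemma lt_of_equilibrium_lt : x₁ < x₂ := by
  by_contra! hle
  have hmono := (ratio_strictMonoOn (b := b) ha hc hψ0.le hψ1).monotoneOn hx₂ hx₁ hle
  have hθ₂ : θ₂ ≤ θ₁ := by
    rw [h₁, h₂, ← rpow_mul_ratio hx₁, ← rpow_mul_ratio hx₂]
    exact mul_le_mul (rpow_le_rpow hx₂.le hle hψ0.le) hmono
      (ratio_pos hx₂ h₂ (hθ₁.trans hθ)).le (rpow_pos_of_pos hx₁ ψ).le
  linarith

lemma rpow_div_lt_of_equilibrium_lt : x₂ ^ ψ / θ₂ < x₁ ^ ψ / θ₁ := by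
  have hratio : ratio a b c ψ x₁ < ratio a b c ψ x₂ :=
    ratio_strictMonoOn ha hc hψ0.le hψ1 hx₁ hx₂
      (lt_of_equilibrium_lt ha hc hψ0 hψ1 hx₁ hx₂ h₁ h₂ hθ₁ hθ)
  have hs₁ := rpow_pos_of_pos hx₁ ψ
  have hs₂ := rpow_pos_of_pos hx₂ ψ
  rw [← rpow_mul_ratio hx₁] at h₁
  rw [← rpow_mul_ratio hx₂] at h₂
  rw [div_lt_div_iff₀ (hθ₁.trans hθ) hθ₁, h₁, h₂]
  nlinarith [mul_pos hs₁ hs₂]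

end Comparison

lemma rpow_two_mul_mul_rpow_neg_two (hx : 0 ≤ x) (hθ : 0 ≤ θ) :
    x ^ (2 * ψ) * θ ^ (-(2 : ℝ)) = (x ^ ψ / θ) ^ 2 := by
  rw [mul_comm 2 ψ, rpow_mul hx, rpow_neg hθ, rpow_two, rpow_two, div_pow, div_eq_mul_inv]

end EquilibriumDispersion

open EquilibriumDispersion in
/-- Step 1 of the second-moment-shock analysis: with `λ(λθ)` the unique
nonnegative solution of `-λ = b (λ/λx)^ψ - d z - λθ`, the TFPQ dispersion
`B(λθ) = (λ(λθ)/λx)^(2ψ) λθ⁻²` is strictly decreasing in `λθ`. -/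
theorem stmt_9 (b ψ lamx d z : ℝ) (hψ0 : 0 < ψ) (hψ1 : ψ < 1)
    (hlamx : 0 < lamx) (hd : 0 < d) (hz : 0 < z)
    (lamθ₁ lamθ₂ l₁ l₂ : ℝ) (hθ₁ : 0 < lamθ₁) (hθ₁₂ : lamθ₁ < lamθ₂)
    (hl₁ : 0 ≤ l₁) (hl₂ : 0 ≤ l₂)
    (heq₁ : -l₁ = b * (l₁ / lamx) ^ ψ - d * z - lamθ₁)
    (heq₂ : -l₂ = b * (l₂ / lamx) ^ ψ - d * z - lamθ₂) :
    (l₂ / lamx) ^ (2 * ψ) * lamθ₂ ^ (-(2 : ℝ))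
      < (l₁ / lamx) ^ (2 * ψ) * lamθ₁ ^ (-(2 : ℝ)) := by
  have hθ₂ : 0 < lamθ₂ := hθ₁.trans hθ₁₂
  have hdz : 0 < d * z := mul_pos hd hz
  have h₁ : lamθ₁ = lamx * (l₁ / lamx) + b * (l₁ / lamx) ^ ψ - d * z := by
    rw [mul_div_cancel₀ _ hlamx.ne']; linarith
  have h₂ : lamθ₂ = lamx * (l₂ / lamx) + b * (l₂ / lamx) ^ ψ - d * z := by
    rw [mul_div_cancel₀ _ hlamx.ne']; linarith
  have hx₁ := pos_of_equilibrium hψ0 (div_nonneg hl₁ hlamx.le) h₁ (by linarith)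
  have hx₂ := pos_of_equilibrium hψ0 (div_nonneg hl₂ hlamx.le) h₂ (by linarith)
  rw [rpow_two_mul_mul_rpow_neg_two hx₁.le hθ₁.le, rpow_two_mul_mul_rpow_neg_two hx₂.le hθ₂.le]
  exact pow_lt_pow_left₀
    (rpow_div_lt_of_equilibrium_lt hlamx hdz.le hψ0 hψ1 hx₁ hx₂ h₁ h₂ hθ₁ hθ₁₂)
    (div_nonneg (rpow_nonneg hx₂.le ψ) hθ₂.le) two_ne_zero
end

section
/- Fix ψ ∈ (0,1), λ_x > 0, b ∈ ℝ, d > 0 and z > 0. Suppose λ > 0 and λ_θ > 0 satisfy λ_θ = λ·(1 + b·λ_x^(−ψ)·λ^(ψ−1)) − d·z. Then λ·(1 + b·ψ·λ_x^(−ψ)·λ^(ψ−1)) > 0 and ψ·λ_θ < λ·(1 + b·ψ·λ_x^(−ψ)·λ^(ψ−1)); equivalently, ψ/(λ·(1 + b·ψ·λ_x^(−ψ)·λ^(ψ−1))) < 1/λ_θ. -/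
/-- Key inequality in the comparative statics for second-moment shocks: if
`λθ = λ (1 + b λx^(-ψ) λ^(ψ-1)) - d z` with `λ, λθ > 0`, then
`λ (1 + b ψ λx^(-ψ) λ^(ψ-1)) > 0` and `ψ λθ < λ (1 + b ψ λx^(-ψ) λ^(ψ-1))`;
equivalently `ψ / (λ (1 + b ψ λx^(-ψ) λ^(ψ-1))) < 1/λθ`. -/
theorem stmt_11 (ψ lamx b d z lam lamθ : ℝ)
    (hψ0 : 0 < ψ) (hψ1 : ψ < 1) (hlamx : 0 < lamx) (hd : 0 < d) (hz : 0 < z)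
    (hlam : 0 < lam) (hlamθ : 0 < lamθ)
    (heq : lamθ = lam * (1 + b * lamx ^ (-ψ) * lam ^ (ψ - 1)) - d * z) :
    0 < lam * (1 + b * ψ * lamx ^ (-ψ) * lam ^ (ψ - 1)) ∧
      ψ * lamθ < lam * (1 + b * ψ * lamx ^ (-ψ) * lam ^ (ψ - 1)) ∧
      ψ / (lam * (1 + b * ψ * lamx ^ (-ψ) * lam ^ (ψ - 1))) < 1 / lamθ := by
  have key : lam * (1 + b * ψ * lamx ^ (-ψ) * lam ^ (ψ - 1))
      = ψ * lamθ + (1 - ψ) * lam + ψ * (d * z) := by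
    rw [heq]; ring
  have h1 : 0 < ψ * lamθ := mul_pos hψ0 hlamθ
  have h2 : 0 < (1 - ψ) * lam := mul_pos (by linarith) hlam
  have h3 : 0 < ψ * (d * z) := mul_pos hψ0 (mul_pos hd hz)
  have hX : 0 < lam * (1 + b * ψ * lamx ^ (-ψ) * lam ^ (ψ - 1)) := by
    rw [key]; linarith
  have hlt : ψ * lamθ < lam * (1 + b * ψ * lamx ^ (-ψ) * lam ^ (ψ - 1)) := by
    rw [key]; linarith
  refine ⟨hX, hlt, ?_⟩
  rw [div_lt_div_iff₀ hX hlamθ]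
  linarith
end

section
/- Let λ_x > 0 and λ > 0, and let μ : [0,∞) → ℝ be differentiable with μ(0) = 0 and λ_x·exp(−λ_x·x) = λ·μ′(x)·exp(−λ·μ(x)) for all x ≥ 0. Then μ(x) = (λ_x/λ)·x for all x ≥ 0. -/
/-- Positive assortative matching: if `μ` is differentiable on `[0,∞)` with
`μ 0 = 0` and the market-clearing condition
`λx exp(-λx x) = λ μ'(x) exp(-λ μ(x))` holds for all `x ≥ 0`, then
`μ x = (λx/λ) x` for all `x ≥ 0`. -/
theorem stmt_12 (lamx lam : ℝ) (hlamx : 0 < lamx) (hlam : 0 < lam)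
    (μ μ' : ℝ → ℝ)
    (hderiv : ∀ x ∈ Set.Ici (0 : ℝ), HasDerivWithinAt μ (μ' x) (Set.Ici 0) x)
    (h0 : μ 0 = 0)
    (hclear : ∀ x ≥ (0 : ℝ),
      lamx * Real.exp (-lamx * x) = lam * μ' x * Real.exp (-lam * μ x)) :
    ∀ x ≥ (0 : ℝ), μ x = (lamx / lam) * x := by
  intro x hx
  set f : ℝ → ℝ := fun t => Real.exp (-lam * μ t) - Real.exp (-lamx * t) with hf
  have hfd : ∀ t ∈ Set.Ici (0 : ℝ), HasDerivWithinAt f 0 (Set.Ici (0:ℝ)) t := by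
    intro t ht
    have h1 : HasDerivWithinAt (fun s => Real.exp (-lam * μ s))
        (Real.exp (-lam * μ t) * (-lam * μ' t)) (Set.Ici (0:ℝ)) t :=
      (((hderiv t ht).const_mul (-lam)).exp)
    have h2 : HasDerivWithinAt (fun s => Real.exp (-lamx * s))
        (Real.exp (-lamx * t) * (-lamx * 1)) (Set.Ici (0:ℝ)) t :=
      ((hasDerivWithinAt_id t _).const_mul (-lamx)).exp
    have := h1.sub h2
    have heq : Real.exp (-lam * μ t) * (-lam * μ' t)
        - Real.exp (-lamx * t) * (-lamx * 1) = 0 := by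
      have := hclear t ht
      nlinarith [this]
    rw [heq] at this
    exact this
  have hcont : ContinuousOn f (Set.Icc 0 x) := by
    apply ContinuousOn.mono (fun t ht => (hfd t ht).continuousWithinAt)
    exact Set.Icc_subset_Ici_self
  have hkey : f x = f 0 := by
    apply constant_of_has_deriv_right_zero hcont
    · intro t ht
      exact (hfd t ht.1).mono (Set.Ici_subset_Ici.mpr ht.1)
    · exact ⟨hx, le_rfl⟩
  have : Real.exp (-lam * μ x) = Real.exp (-lamx * x) := by
    have h00 : f 0 = 0 := by simp [hf, h0]
    have := hkey
    rw [h00] at this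
    simpa [hf, sub_eq_zero] using this
  have heq : -lam * μ x = -lamx * x := Real.exp_injective this
  field_simp
  nlinarith [heq]
end

section
/- Fix parameters α > 0, γ > 0 with α + γ < 1, ξ > 1, ψ ∈ (0,1), λ_x > 0, z_t > 0, and set D := 1 + (1−α−γ)(ξ−1). For λ_θ > 0 let λ(λ_θ) denote the unique solution in [0,∞) of −λ = (((ξ−1)(γ−ψ(1−α))−ψ)/(γD))·(λ/λ_x)^ψ − ((1+(ξ−1)(1−α))/D)·z_t − λ_θ. Then λ(λ_θ) is strictly increasing in λ_θ: if 0 < λ_θ₁ < λ_θ₂ then λ(λ_θ₁) < λ(λ_θ₂). Consequently wage inequality (ψ/γ)²·λ_x^(−2ψ)·λ(λ_θ)^(2ψ−2) is strictly decreasing in λ_θ. -/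
open Real

lemma bern_aux {a b ψ : ℝ} (hψ0 : 0 < ψ) (hψ1 : ψ < 1) (hb : 0 < b) (hab : b ≤ a) :
    a ^ ψ - b ^ ψ ≤ ψ * b ^ (ψ - 1) * (a - b) := by
  have ha : 0 < a := hb.trans_le hab
  have h1 : (a / b) ^ ψ ≤ 1 + ψ * (a / b - 1) := by
    have := rpow_one_add_le_one_add_mul_self (s := a / b - 1)
      (by nlinarith [div_pos ha hb]) hψ0.le hψ1.le
    simpa using this
  have h2 : (a / b) ^ ψ = a ^ ψ / b ^ ψ := Real.div_rpow ha.le hb.le ψ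
  have hbψ : (0:ℝ) < b ^ ψ := Real.rpow_pos_of_pos hb _
  have h3 : a ^ ψ ≤ b ^ ψ + ψ * (b ^ ψ * (a / b - 1)) := by
    have e : a ^ ψ = b ^ ψ * (a / b) ^ ψ := by rw [h2]; field_simp
    nlinarith [mul_le_mul_of_nonneg_left h1 hbψ.le]
  have h4 : b ^ ψ * (a / b - 1) = b ^ (ψ - 1) * (a - b) := by
    rw [Real.rpow_sub hb, Real.rpow_one]
    field_simp
  rw [h4] at h3; linarith

lemma key {c ψ a b Ka Kb : ℝ} (hψ0 : 0 < ψ) (hψ1 : ψ < 1)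
    (ha : 0 ≤ a) (hb : 0 ≤ b) (hKa : 0 < Ka) (hKab : Ka < Kb)
    (hea : a + c * a ^ ψ = Ka) (heb : b + c * b ^ ψ = Kb) : 0 < a ∧ a < b := by
  have hKb : 0 < Kb := hKa.trans hKab
  have hane : 0 < a := by
    rcases ha.lt_or_eq with h | h
    · exact h
    · exfalso; rw [← h, Real.zero_rpow hψ0.ne'] at hea; simp at hea; linarith
  have hbne : 0 < b := by
    rcases hb.lt_or_eq with h | h
    · exact h
    · exfalso; rw [← h, Real.zero_rpow hψ0.ne'] at heb; simp at heb; linarith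
  refine ⟨hane, ?_⟩
  by_contra hle
  push_neg at hle
  rcases hle.lt_or_eq with hlt | heqab
  · -- b < a
    rcases le_or_gt 0 c with hc | hc
    · have : b ^ ψ ≤ a ^ ψ := Real.rpow_le_rpow hbne.le hlt.le hψ0.le
      nlinarith
    · -- c < 0
      have hbb : -c * b ^ ψ < b := by nlinarith
      have hbψ : (0:ℝ) < b ^ ψ := Real.rpow_pos_of_pos hbne _
      have hcb : -c < b ^ (1 - ψ) := by
        have : b ^ (1 - ψ) = b / b ^ ψ := by
          rw [Real.rpow_sub hbne, Real.rpow_one]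
        rw [this, lt_div_iff₀ hbψ]; linarith
      have hbern := bern_aux hψ0 hψ1 hbne hlt.le
      have hpow : b ^ (1 - ψ) * b ^ (ψ - 1) = 1 := by
        rw [← Real.rpow_add hbne]; norm_num
      have hbψ1 : (0:ℝ) < b ^ (ψ - 1) := Real.rpow_pos_of_pos hbne _
      -- Ka - Kb ≥ (a - b)(1 + c ψ b^(ψ-1)) > 0
      have h5 : Ka - Kb = (a - b) + c * (a ^ ψ - b ^ ψ) := by
        rw [← hea, ← heb]; ring
      have h6 : c * (a ^ ψ - b ^ ψ) ≥ c * (ψ * b ^ (ψ - 1) * (a - b)) := by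
        nlinarith
      have h7a : -c * b ^ (ψ - 1) < 1 := by
        nlinarith [mul_lt_mul_of_pos_right hcb hbψ1]
      have h7 : 1 + c * ψ * b ^ (ψ - 1) > 1 - ψ := by nlinarith
      nlinarith
  · rw [← heqab] at hea; linarith


/-- Second-moment shocks to the firm-type distribution: the equilibrium
job-distribution parameter `λ(λθ)` (the unique nonnegative solution of the
equilibrium equation) is strictly increasing in `λθ`, and consequently wage
inequality `(ψ/γ)² λx^(-2ψ) λ(λθ)^(2ψ-2)` is strictly decreasing in `λθ`. -/
theorem stmt_15 (α γ ξ ψ lamx zt : ℝ)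
    (hα : 0 < α) (hγ : 0 < γ) (hαγ : α + γ < 1) (hξ : 1 < ξ)
    (hψ0 : 0 < ψ) (hψ1 : ψ < 1) (hlamx : 0 < lamx) (hz : 0 < zt)
    (lamθ₁ lamθ₂ l₁ l₂ : ℝ) (hθ₁ : 0 < lamθ₁) (hθ₁₂ : lamθ₁ < lamθ₂)
    (hl₁ : 0 ≤ l₁) (hl₂ : 0 ≤ l₂)
    (heq₁ : -l₁ = (((ξ - 1) * (γ - ψ * (1 - α)) - ψ) / (γ * (1 + (1 - α - γ) * (ξ - 1))))
          * (l₁ / lamx) ^ ψ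
        - ((1 + (ξ - 1) * (1 - α)) / (1 + (1 - α - γ) * (ξ - 1))) * zt - lamθ₁)
    (heq₂ : -l₂ = (((ξ - 1) * (γ - ψ * (1 - α)) - ψ) / (γ * (1 + (1 - α - γ) * (ξ - 1))))
          * (l₂ / lamx) ^ ψ
        - ((1 + (ξ - 1) * (1 - α)) / (1 + (1 - α - γ) * (ξ - 1))) * zt - lamθ₂) :
    l₁ < l₂ ∧
      (ψ / γ) ^ 2 * lamx ^ (-(2 * ψ)) * l₂ ^ (2 * ψ - 2)
        < (ψ / γ) ^ 2 * lamx ^ (-(2 * ψ)) * l₁ ^ (2 * ψ - 2) := by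
  set A : ℝ := ((ξ - 1) * (γ - ψ * (1 - α)) - ψ) / (γ * (1 + (1 - α - γ) * (ξ - 1))) with hA
  set B : ℝ := (1 + (ξ - 1) * (1 - α)) / (1 + (1 - α - γ) * (ξ - 1)) with hB
  have hD : (0:ℝ) < 1 + (1 - α - γ) * (ξ - 1) := by nlinarith
  have hBpos : 0 < B := by
    apply div_pos _ hD; nlinarith
  have hc : ∀ l : ℝ, 0 ≤ l → A * (l / lamx) ^ ψ = A / lamx ^ ψ * l ^ ψ := by
    intro l hl
    rw [Real.div_rpow hl hlamx.le]
    ring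
  have hea : l₁ + A / lamx ^ ψ * l₁ ^ ψ = B * zt + lamθ₁ := by
    rw [← hc l₁ hl₁]; linarith [heq₁]
  have heb : l₂ + A / lamx ^ ψ * l₂ ^ ψ = B * zt + lamθ₂ := by
    rw [← hc l₂ hl₂]; linarith [heq₂]
  have hKa : 0 < B * zt + lamθ₁ := by positivity
  have hKab : B * zt + lamθ₁ < B * zt + lamθ₂ := by linarith
  obtain ⟨hl1pos, hlt⟩ := key hψ0 hψ1 hl₁ hl₂ hKa hKab hea heb
  refine ⟨hlt, ?_⟩
  have hrp : l₂ ^ (2 * ψ - 2) < l₁ ^ (2 * ψ - 2) :=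
    Real.rpow_lt_rpow_of_neg hl1pos hlt (by linarith)
  have hC : 0 < (ψ / γ) ^ 2 * lamx ^ (-(2 * ψ)) := by positivity
  calc (ψ / γ) ^ 2 * lamx ^ (-(2 * ψ)) * l₂ ^ (2 * ψ - 2)
      < (ψ / γ) ^ 2 * lamx ^ (-(2 * ψ)) * l₁ ^ (2 * ψ - 2) :=
        mul_lt_mul_of_pos_left hrp hC
end
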